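/- arXiv:1709.00982 — 3 statements merged into one kernel-verified Lean document; each statement's English description precedes it below -/
import Mathlib

section
/- For each vector v in S of the form v = (e_l - e_{l+1}) ⊗ ẽ_m, the equality sum_{(i,j)∈E} [p_{ij}/(L_i + L_j) · ((e_i - e_j)(L_i e_i^T - L_j e_j^T)) ⊗ I_n] v = v/(N-1) holds, where p_{ij} = (1/L_i + 1/L_j)/((N-1) sum_t 1/L_t). -/
open Matrix Kronecker


theorem half_sum (N : ℕ) (f : Fin N × Fin N → ℝ) (hsym : ∀ i j, f (i,j) = f (j,i))
    (hdiag : ∀ i, f (i,i) = 0) :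
    ∑ q ∈ Finset.univ.filter (fun q : Fin N × Fin N => q.1 < q.2), f q
      = (1/2) * ∑ i, ∑ j, f (i, j) := by
  have h1 : ∑ q ∈ Finset.univ.filter (fun q : Fin N × Fin N => q.1 < q.2), f q
      = ∑ q ∈ Finset.univ.filter (fun q : Fin N × Fin N => q.2 < q.1), f q := by
    apply Finset.sum_nbij' (i := Prod.swap) (j := Prod.swap) <;>
      simp +contextual [Prod.swap, hsym]
  have h2 : ∑ q : Fin N × Fin N, f q
      = ∑ q ∈ Finset.univ.filter (fun q : Fin N × Fin N => q.1 < q.2), f q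
        + ∑ q ∈ Finset.univ.filter (fun q : Fin N × Fin N => q.2 < q.1), f q := by
    rw [← Finset.sum_filter_add_sum_filter_not Finset.univ (fun q : Fin N × Fin N => q.1 < q.2)]
    congr 1
    rw [← Finset.sum_filter_add_sum_filter_not (Finset.univ.filter _)
      (fun q : Fin N × Fin N => q.2 < q.1)]
    have hz : ∑ q ∈ (Finset.univ.filter (fun q : Fin N × Fin N => ¬ q.1 < q.2)).filter
        (fun q : Fin N × Fin N => ¬ q.2 < q.1), f q = 0 := by
      apply Finset.sum_eq_zero
      intro q hq
      simp only [Finset.mem_filter] at hq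
      have heq : q.1 = q.2 := le_antisymm (not_lt.1 hq.2) (not_lt.1 hq.1.2)
      calc f q = f (q.1, q.2) := by rfl
        _ = f (q.1, q.1) := by rw [heq]
        _ = 0 := hdiag q.1
    rw [hz, add_zero, Finset.filter_filter]
    apply Finset.sum_congr _ (fun _ _ => rfl)
    apply Finset.filter_congr
    intro q _
    constructor
    · intro h; exact h.2
    · intro h; exact ⟨asymm h, h⟩
  rw [Fintype.sum_prod_type] at h2
  rw [h1] at h2 ⊢
  linarith [h2]

/-- For each basis vector `v = (e l - e (l+1)) ⊗ ẽ m` of `S`, one has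
`∑_{(i,j)∈E} [p_{ij}/(L_i+L_j) ((e_i - e_j)(L_i e_iᵀ - L_j e_jᵀ)) ⊗ I_n] v = v/(N-1)`,
where `p_{ij} = (1/L_i + 1/L_j)/((N-1) ∑_t 1/L_t)`. -/
theorem matrix_identity_on_basis_vectors (N n : ℕ) (hN : 2 ≤ N) (hn : 1 ≤ n)
    (L : Fin N → ℝ) (hL : ∀ i, 0 < L i)
    (l : Fin N) (l' : Fin N) (hl : (l' : ℕ) = (l : ℕ) + 1) (m : Fin n)
    (v : Fin N × Fin n → ℝ)
    (hv : v = fun p => ((if p.1 = l then (1 : ℝ) else 0) -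
        (if p.1 = l' then (1 : ℝ) else 0)) * (if p.2 = m then (1 : ℝ) else 0)) :
    Matrix.mulVec
      (∑ q ∈ Finset.univ.filter (fun q : Fin N × Fin N => q.1 < q.2),
        (((1 / L q.1 + 1 / L q.2) / (((N : ℝ) - 1) * ∑ t, 1 / L t)) / (L q.1 + L q.2)) •
          ((Matrix.vecMulVec
              ((Pi.single q.1 1 : Fin N → ℝ) - (Pi.single q.2 1 : Fin N → ℝ))
              (L q.1 • (Pi.single q.1 1 : Fin N → ℝ) -
                L q.2 • (Pi.single q.2 1 : Fin N → ℝ))) ⊗ₖ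
            (1 : Matrix (Fin n) (Fin n) ℝ)))
      v = (1 / ((N : ℝ) - 1)) • v := by
  have hll' : l ≠ l' := by
    intro h; rw [h] at hl; omega
  have hS : 0 < ∑ t, 1 / L t :=
    Finset.sum_pos (fun t _ => one_div_pos.2 (hL t)) ⟨l, Finset.mem_univ l⟩
  have hN1 : (0:ℝ) < (N:ℝ) - 1 := by
    have : (2:ℝ) ≤ (N:ℝ) := by exact_mod_cast hN
    linarith
  subst hv
  funext p
  obtain ⟨k, r⟩ := p
  simp only [Matrix.mulVec, dotProduct, Matrix.sum_apply, Matrix.smul_apply,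
    Matrix.kroneckerMap_apply, Matrix.vecMulVec_apply, Matrix.one_apply,
    Pi.sub_apply, Pi.smul_apply, Pi.single_apply, smul_eq_mul]
  simp only [Finset.sum_mul]
  rw [Finset.sum_comm]
  simp only [Fintype.sum_prod_type, mul_ite, ite_mul, mul_one, mul_zero, one_mul, zero_mul,
    sub_mul, mul_sub, Finset.sum_sub_distrib, Finset.sum_ite_eq, Finset.sum_ite_eq',
    Finset.mem_univ, if_true, sub_zero, zero_sub]
  by_cases hrm : r = m
  · simp only [hrm, if_true]
    rw [← Finset.sum_sub_distrib]
    rw [half_sum N _ ?hsym ?hdiag]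
    case hsym =>
      intro i j
      dsimp only
      split_ifs <;> ring
    case hdiag =>
      intro i
      dsimp only
      split_ifs <;> ring
    simp only [mul_ite, ite_mul, mul_zero, zero_mul, mul_one, one_mul, sub_mul, mul_sub,
      Finset.sum_sub_distrib, Finset.sum_ite_eq, Finset.sum_ite_eq', Finset.mem_univ, if_true,
      sub_zero, zero_sub, Finset.sum_ite_irrel, Finset.sum_const_zero]
    set S0 := ∑ t : Fin N, 1 / L t with hS0def
    have hD : (0:ℝ) < ↑N * S0 - S0 := by
      have h1 : (N:ℝ) * S0 - S0 = ((N:ℝ) - 1) * S0 := by ring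
      rw [h1]; exact mul_pos hN1 hS
    have hterm : ∀ c x : Fin N, (1/L c + 1/L x)/((N:ℝ)*S0 - S0)/(L c + L x)*L c
        = 1/((N:ℝ)*S0-S0) * (1/L x) := by
      intro c x
      have hc := (hL c).ne'
      have hx := (hL x).ne'
      have hcx : L c + L x ≠ 0 := (add_pos (hL c) (hL x)).ne'
      field_simp
      ring
    have hterm2 : ∀ c x : Fin N, (1/L x + 1/L c)/((N:ℝ)*S0 - S0)/(L x + L c)*L c
        = 1/((N:ℝ)*S0-S0) * (1/L x) := by
      intro c x; rw [add_comm (1/L x), add_comm (L x)]; exact hterm c x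
    simp only [hterm, hterm2, ← Finset.mul_sum, ← hS0def]
    have hfin : 1/((N:ℝ)*S0-S0) * S0 = 1/((N:ℝ)-1) := by
      have h1 : (N:ℝ) * S0 - S0 = ((N:ℝ) - 1) * S0 := by ring
      rw [h1, one_div, mul_inv, mul_assoc, inv_mul_cancel₀ hS.ne', mul_one, one_div]
    by_cases hkl : k = l
    · subst hkl
      simp only [if_pos rfl, if_neg hll', hfin]
      norm_num
      ring
    · by_cases hkl' : k = l'
      · subst hkl'
        simp only [if_pos rfl, if_neg (Ne.symm (fun h => hkl h.symm)), hfin]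
        norm_num
        ring
      · simp only [if_neg hkl, if_neg hkl']
        ring
  · simp only [hrm, if_false]
    simp
end

section
/- For all x in the subspace S = {x ∈ ℝ^{nN} : x_1 + ... + x_N = 0}, one has sum_{(i,j)∈E} [p_{ij}/(L_i + L_j) · ((e_i - e_j)(L_i e_i^T - L_j e_j^T)) ⊗ I_n] x = x/(N-1), where p_{ij} = (1/L_i + 1/L_j)/((N-1) sum_{t=1}^N 1/L_t). -/
/-!
Since `(1/a + 1/b)/(a + b) = 1/(ab)`, the `(i, j)` term is
`((N-1)σ)⁻¹ (e_i - e_j)(e_i/L_j - e_j/L_i)ᵀ ⊗ I_n` with `σ = ∑ₜ 1/L_t`.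
Splitting each pair into its two ordered halves, the sum over pairs of
`(e_i - e_j)(w_j e_i - w_i e_j)ᵀ` becomes the full double sum of `w_j (e_i - e_j) e_iᵀ`,
which is `σ I - w 1ᵀ` for `w = (1/L_t)ₜ`. The matrix `w 1ᵀ ⊗ I_n` kills `S`,
leaving `((N-1)σ)⁻¹ σ x`.
-/

open Matrix Kronecker Finset

section

variable {ι κ R : Type*} [Fintype ι]

theorem sum_filter_lt_add_swap [LinearOrder ι] {M : Type*} [AddCommMonoid M] (g : ι → ι → M)
    (hg : ∀ i, g i i = 0) :
    ∑ q ∈ univ.filter (fun q : ι × ι => q.1 < q.2), (g q.1 q.2 + g q.2 q.1) = ∑ i, ∑ j, g i j := by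
  have hswap : ∑ q ∈ univ.filter (fun q : ι × ι => q.1 < q.2), g q.2 q.1
      = ∑ q ∈ univ.filter (fun q : ι × ι => q.2 < q.1), g q.1 q.2 :=
    sum_nbij' Prod.swap Prod.swap (by simp) (by simp) (by simp) (by simp) (by simp)
  rw [sum_add_distrib, hswap, sum_filter, sum_filter, ← sum_add_distrib, ← Fintype.sum_prod_type']
  refine sum_congr rfl fun q _ => ?_
  rcases lt_trichotomy q.1 q.2 with h | h | h
  · simp [h, h.not_gt]
  · simp [h, hg]
  · simp [h, h.not_gt]

variable [CommRing R]

theorem sum_filter_lt_vecMulVec_single_sub [LinearOrder ι] (w : ι → R) :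
    ∑ q ∈ univ.filter (fun q : ι × ι => q.1 < q.2),
      vecMulVec (Pi.single q.1 1 - Pi.single q.2 1)
        (w q.2 • Pi.single q.1 1 - w q.1 • Pi.single q.2 1)
    = (∑ t, w t) • 1 - vecMulVec w 1 := by
  set g : ι → ι → Matrix ι ι R :=
    fun i j => w j • vecMulVec (Pi.single i 1 - Pi.single j 1) (Pi.single i 1)
  have hpair : ∀ i j, vecMulVec (Pi.single i 1 - Pi.single j 1)
      (w j • Pi.single i 1 - w i • Pi.single j 1) = g i j + g j i := by
    intro i j
    simp only [g, vecMulVec_sub, sub_vecMulVec, vecMulVec_smul, smul_sub]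
    abel
  simp_rw [hpair]
  rw [sum_filter_lt_add_swap g fun i => by simp [g]]
  ext a b
  simp [g, Matrix.sum_apply, vecMulVec_apply, Pi.single_apply, one_apply, mul_sub, sum_sub_distrib,
    mul_ite]

theorem sum_smul_kronecker {σ l m p q : Type*} (s : Finset σ) (c : σ → R)
    (A : σ → Matrix l m R) (B : Matrix p q R) :
    ∑ i ∈ s, c i • (A i ⊗ₖ B) = (∑ i ∈ s, c i • A i) ⊗ₖ B := by
  ext
  simp [Matrix.sum_apply, sum_mul, mul_assoc]

theorem kronecker_one_mulVec_apply [DecidableEq κ] [Fintype κ] (A : Matrix ι ι R)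
    (x : ι × κ → R) (i : ι) (k : κ) :
    ((A ⊗ₖ (1 : Matrix κ κ R)) *ᵥ x) (i, k) = (A *ᵥ fun j => x (j, k)) i := by
  simp [mulVec, dotProduct, Fintype.sum_prod_type, one_apply]

theorem smul_one_sub_vecMulVec_mulVec_of_sum_eq_zero [DecidableEq ι] (s : R) (w v : ι → R)
    (hv : ∑ i, v i = 0) : (s • 1 - vecMulVec w 1) *ᵥ v = s • v := by
  rw [sub_mulVec, smul_mulVec, one_mulVec, vecMulVec_mulVec, one_dotProduct, hv]
  simp

end

theorem inv_add_inv_div_add_smul_sub {E : Type*} [AddCommGroup E] [Module ℝ E] {a b : ℝ}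
    (ha : 0 < a) (hb : 0 < b) (K : ℝ) (u v : E) :
    ((1 / a + 1 / b) / K / (a + b)) • (a • u - b • v) = K⁻¹ • ((1 / b) • u - (1 / a) • v) := by
  simp only [smul_sub, smul_smul]
  congr 2 <;> (field_simp; ring)

theorem matrix_identity_on_S_general (N n : ℕ) (hN : 2 ≤ N)
    (L : Fin N → ℝ) (hL : ∀ i, 0 < L i)
    (x : Fin N × Fin n → ℝ) (hx : ∀ k : Fin n, ∑ i : Fin N, x (i, k) = 0) :
    Matrix.mulVec
      (∑ q ∈ Finset.univ.filter (fun q : Fin N × Fin N => q.1 < q.2),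
        (((1 / L q.1 + 1 / L q.2) / (((N : ℝ) - 1) * ∑ t, 1 / L t)) / (L q.1 + L q.2)) •
          ((Matrix.vecMulVec
              ((Pi.single q.1 1 : Fin N → ℝ) - (Pi.single q.2 1 : Fin N → ℝ))
              (L q.1 • (Pi.single q.1 1 : Fin N → ℝ) -
                L q.2 • (Pi.single q.2 1 : Fin N → ℝ))) ⊗ₖ
            (1 : Matrix (Fin n) (Fin n) ℝ)))
      x = (1 / ((N : ℝ) - 1)) • x := by
  have hS : 0 < ∑ t, 1 / L t :=
    sum_pos (fun t _ => one_div_pos.mpr (hL t)) ⟨⟨0, by omega⟩, mem_univ _⟩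
  simp only [sum_smul_kronecker, ← vecMulVec_smul, inv_add_inv_div_add_smul_sub, hL]
  simp only [vecMulVec_smul]
  rw [← smul_sum, sum_filter_lt_vecMulVec_single_sub fun t => 1 / L t, smul_kronecker, smul_mulVec]
  ext ⟨i, k⟩
  rw [Pi.smul_apply, kronecker_one_mulVec_apply,
    smul_one_sub_vecMulVec_mulVec_of_sum_eq_zero _ _ _ (hx k)]
  simp only [Pi.smul_apply, smul_eq_mul]
  field_simp

/-- For all `x ∈ S = {x : x_1 + ⋯ + x_N = 0}`,
`∑_{(i,j)∈E} [p_{ij}/(L_i+L_j) ((e_i - e_j)(L_i e_iᵀ - L_j e_jᵀ)) ⊗ I_n] x = x/(N-1)`,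
where `p_{ij} = (1/L_i + 1/L_j)/((N-1) ∑_t 1/L_t)`. -/
theorem matrix_identity_on_S (N n : ℕ) (hN : 2 ≤ N) (hn : 1 ≤ n)
    (L : Fin N → ℝ) (hL : ∀ i, 0 < L i)
    (x : Fin N × Fin n → ℝ) (hx : ∀ k : Fin n, ∑ i : Fin N, x (i, k) = 0) :
    Matrix.mulVec
      (∑ q ∈ Finset.univ.filter (fun q : Fin N × Fin N => q.1 < q.2),
        (((1 / L q.1 + 1 / L q.2) / (((N : ℝ) - 1) * ∑ t, 1 / L t)) / (L q.1 + L q.2)) •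
          ((Matrix.vecMulVec
              ((Pi.single q.1 1 : Fin N → ℝ) - (Pi.single q.2 1 : Fin N → ℝ))
              (L q.1 • (Pi.single q.1 1 : Fin N → ℝ) -
                L q.2 • (Pi.single q.2 1 : Fin N → ℝ))) ⊗ₖ
            (1 : Matrix (Fin n) (Fin n) ℝ)))
      x = (1 / ((N : ℝ) - 1)) • x :=
  matrix_identity_on_S_general N n hN L hL x hx
end

section
/- Let f_i, f_j : ℝ^n → ℝ be convex differentiable functions with Lipschitz gradients of constants L_i, L_j > 0 respectively, and let f(x) = sum over all blocks of f_t(x_t). For x ∈ ℝ^{nN} define d_i(x) = -(∇f_i(x_i) - ∇f_j(x_j))/(L_i + L_j) and d_j(x) = -d_i(x). Then f(x) - f(x + U_i d_i(x) + U_j d_j(x)) ≥ ‖∇f_i(x_i) - ∇f_j(x_j)‖^2 / (2(L_i + L_j)), where U_i d places vector d in block i and zeros elsewhere. -/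
/-! Along the segment `s ↦ x + s • d`, a Lipschitz gradient makes
`s ↦ φ (x + s • d) - s ⟪∇φ x, d⟫ - (L/2) s² ‖d‖²` nonincreasing, which gives the quadratic upper
bound `φ (x + d) ≤ φ x + ⟪∇φ x, d⟫ + (L/2) ‖d‖²`. Moving block `i` by `d` and block `j` by `-d`
changes only two summands, so the two bounds add up to a quadratic in `d` with curvature
`L_i + L_j`, and the step `d = -(∇f_i - ∇f_j)/(L_i + L_j)` is its minimiser. -/

open Set Function

open scoped RealInnerProductSpace

section Descent

variable {E : Type*} [NormedAddCommGroup E] [InnerProductSpace ℝ E] [CompleteSpace E]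

theorem HasGradientAt.hasDerivAt_comp_add_smul {φ : E → ℝ} {g x d : E} {t : ℝ}
    (h : HasGradientAt φ g (x + t • d)) :
    HasDerivAt (fun s : ℝ => φ (x + s • d)) ⟪g, d⟫ t := by
  have hline : HasDerivAt (fun s : ℝ => x + s • d) d t := by
    simpa using ((hasDerivAt_id t).smul_const d).const_add x
  have hcomp := h.hasFDerivAt.comp_hasDerivAt t hline
  simp only [InnerProductSpace.toDual_apply_apply] at hcomp
  exact hcomp

theorem image_add_le_of_lipschitz_gradient {φ : E → ℝ} {G : E → E} {L : ℝ}
    (hgrad : ∀ y, HasGradientAt φ (G y) y) (x : E) (hlip : ∀ y, ‖G y - G x‖ ≤ L * ‖y - x‖)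
    (d : E) :
    φ (x + d) ≤ φ x + ⟪G x, d⟫ + L / 2 * ‖d‖ ^ 2 := by
  let h : ℝ → ℝ := fun s => φ (x + s • d) - s * ⟪G x, d⟫ - L / 2 * s ^ 2 * ‖d‖ ^ 2
  let h' : ℝ → ℝ := fun s => ⟪G (x + s • d), d⟫ - ⟪G x, d⟫ - L * s * ‖d‖ ^ 2
  have hderiv : ∀ s, HasDerivAt h (h' s) s := fun s => by
    have hquad : HasDerivAt (fun s : ℝ => L / 2 * s ^ 2 * ‖d‖ ^ 2) (L * s * ‖d‖ ^ 2) s := by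
      refine (((hasDerivAt_pow 2 s).const_mul (L / 2)).mul_const (‖d‖ ^ 2)).congr_deriv ?_
      ring
    exact (((hgrad _).hasDerivAt_comp_add_smul).sub
      ((hasDerivAt_id s).mul_const _ |>.congr_deriv (one_mul _))).sub hquad
  have hnonpos : ∀ s ∈ interior (Ici (0 : ℝ)), h' s ≤ 0 := by
    intro s hs
    rw [interior_Ici, mem_Ioi] at hs
    have hstep : ‖G (x + s • d) - G x‖ ≤ L * (s * ‖d‖) := by
      simpa [norm_smul, abs_of_pos hs] using hlip (x + s • d)
    calc h' s = ⟪G (x + s • d) - G x, d⟫ - L * s * ‖d‖ ^ 2 := by simp only [h', inner_sub_left]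
      _ ≤ ‖G (x + s • d) - G x‖ * ‖d‖ - L * s * ‖d‖ ^ 2 := by
        gcongr; exact real_inner_le_norm _ _
      _ ≤ L * (s * ‖d‖) * ‖d‖ - L * s * ‖d‖ ^ 2 := by gcongr
      _ = 0 := by ring
  have hanti : AntitoneOn h (Ici 0) :=
    antitoneOn_of_hasDerivWithinAt_nonpos (convex_Ici 0)
      (fun s _ => (hderiv s).continuousAt.continuousWithinAt)
      (fun s _ => (hderiv s).hasDerivWithinAt) hnonpos
  have h10 : h 1 ≤ h 0 := hanti (mem_Ici.2 le_rfl) (mem_Ici.2 zero_le_one) zero_le_one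
  norm_num [h] at h10
  linarith

theorem image_add_add_image_sub_le_of_lipschitz_gradient {φ ψ : E → ℝ} {G H : E → E}
    {Lφ Lψ : ℝ} (hφ : ∀ y, HasGradientAt φ (G y) y) (hψ : ∀ y, HasGradientAt ψ (H y) y)
    (x y : E) (hGx : ∀ z, ‖G z - G x‖ ≤ Lφ * ‖z - x‖) (hHy : ∀ z, ‖H z - H y‖ ≤ Lψ * ‖z - y‖)
    (d : E) :
    φ (x + d) + ψ (y - d) ≤ φ x + ψ y + ⟪G x - H y, d⟫ + (Lφ + Lψ) / 2 * ‖d‖ ^ 2 := by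
  have hx := image_add_le_of_lipschitz_gradient hφ x hGx d
  have hy := image_add_le_of_lipschitz_gradient hψ y hHy (-d)
  rw [← sub_eq_add_neg, inner_neg_right, norm_neg] at hy
  rw [inner_sub_left]
  linarith

end Descent

theorem inner_neg_inv_smul_add_half_mul_norm_sq {E : Type*} [NormedAddCommGroup E]
    [InnerProductSpace ℝ E] (v : E) (c : ℝ) :
    ⟪v, -c⁻¹ • v⟫ + c / 2 * ‖-c⁻¹ • v‖ ^ 2 = -(‖v‖ ^ 2 / (2 * c)) := by
  rw [neg_smul, inner_neg_right, real_inner_smul_right, real_inner_self_eq_norm_sq, norm_neg, norm_smul,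
    Real.norm_eq_abs, mul_pow, sq_abs]
  have hc : c * c⁻¹ ^ 2 = c⁻¹ := by simpa [sq, mul_assoc] using inv_mul_mul_self c⁻¹
  linear_combination ‖v‖ ^ 2 / 2 * hc

theorem Fintype.sum_sub_sum_update_update {ι α β : Type*} [Fintype ι] [DecidableEq ι]
    [AddCommGroup β] (F : ι → α → β) (x : ι → α) {i j : ι} (hij : i ≠ j) (a b : α) :
    ∑ t, F t (x t) - ∑ t, F t (update (update x i a) j b t) =
      (F i (x i) - F i a) + (F j (x j) - F j b) := by
  rw [← Finset.sum_sub_distrib, Fintype.sum_eq_add i j hij]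
  · simp [update_of_ne hij]
  · rintro t ⟨hti, htj⟩
    simp [update_of_ne hti, update_of_ne htj]

theorem two_block_descent_general (N n : ℕ)
    (L : Fin N → ℝ)
    (f : Fin N → EuclideanSpace ℝ (Fin n) → ℝ)
    (g : Fin N → EuclideanSpace ℝ (Fin n) → EuclideanSpace ℝ (Fin n))
    (hgrad : ∀ t x, HasGradientAt (f t) (g t x) x)
    (hlip : ∀ t x y, ‖g t x - g t y‖ ≤ L t * ‖x - y‖)
    (i j : Fin N) (hij : i ≠ j)
    (x : Fin N → EuclideanSpace ℝ (Fin n))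
    (di : EuclideanSpace ℝ (Fin n))
    (hdi : di = -(L i + L j)⁻¹ • (g i (x i) - g j (x j)))
    (x' : Fin N → EuclideanSpace ℝ (Fin n))
    (hx' : x' = Function.update (Function.update x i (x i + di)) j (x j - di)) :
    (∑ t, f t (x t)) - (∑ t, f t (x' t)) ≥
      ‖g i (x i) - g j (x j)‖ ^ 2 / (2 * (L i + L j)) := by
  subst hx'
  rw [Fintype.sum_sub_sum_update_update _ x hij]
  have hpair := image_add_add_image_sub_le_of_lipschitz_gradient (hgrad i) (hgrad j) (x i) (x j)
    (fun z => hlip i z (x i)) (fun z => hlip j z (x j)) di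
  have hstep := inner_neg_inv_smul_add_half_mul_norm_sq (g i (x i) - g j (x j)) (L i + L j)
  rw [← hdi] at hstep
  linarith

/-- The descent inequality (10): for the optimal paired step
`d_i = -(∇f_i(x_i) - ∇f_j(x_j))/(L_i + L_j)`, `d_j = -d_i`,
`f(x) - f(x + U_i d_i + U_j d_j) ≥ ‖∇f_i(x_i) - ∇f_j(x_j)‖² / (2(L_i + L_j))`. -/
theorem two_block_descent (N n : ℕ) (hN : 2 ≤ N) (hn : 1 ≤ n)
    (L : Fin N → ℝ) (hL : ∀ t, 0 < L t)
    (f : Fin N → EuclideanSpace ℝ (Fin n) → ℝ)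
    (g : Fin N → EuclideanSpace ℝ (Fin n) → EuclideanSpace ℝ (Fin n))
    (hconv : ∀ t, ConvexOn ℝ Set.univ (f t))
    (hgrad : ∀ t x, HasGradientAt (f t) (g t x) x)
    (hlip : ∀ t x y, ‖g t x - g t y‖ ≤ L t * ‖x - y‖)
    (i j : Fin N) (hij : i ≠ j)
    (x : Fin N → EuclideanSpace ℝ (Fin n))
    (di : EuclideanSpace ℝ (Fin n))
    (hdi : di = -(L i + L j)⁻¹ • (g i (x i) - g j (x j)))
    (x' : Fin N → EuclideanSpace ℝ (Fin n))
    (hx' : x' = Function.update (Function.update x i (x i + di)) j (x j - di)) :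
    (∑ t, f t (x t)) - (∑ t, f t (x' t)) ≥
      ‖g i (x i) - g j (x j)‖ ^ 2 / (2 * (L i + L j)) :=
  two_block_descent_general N n L f g hgrad hlip i j hij x di hdi x' hx'
end
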